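/- A group of orientation-preserving homeomorphisms of the real line (or of (0,1)) acting freely is left-orderable with an Archimedean order, and hence is isomorphic to a subgroup of (ℝ, +); in particular it is abelian. -/

import Mathlib

/-!
Order the group by `g ≤ h ↔ g • 0 ≤ h • 0`. By the intermediate value theorem a nontrivial element
moves every point in the same direction, so comparing two elements at one point compares them
everywhere; hence the order is invariant under multiplication on both sides. It is Archimedean
because a bounded forward orbit of a continuous map converges to a fixed point.

Hölder's argument shows that an Archimedean bi-ordered group is abelian. If `b * a < a * b`, put
`ε = (b * a)⁻¹ * (a * b) > 1`. Either `ε` is the least element above `1`, and then it generates the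
group, or there is `δ > 1` with `δ * δ ≤ ε`; locating `a` and `b` between consecutive powers of `δ`
gives `ε < δ * δ`. Finally, an Archimedean ordered abelian group embeds in `ℝ`.
-/

section Holder

variable {G : Type*} [Group G] [LinearOrder G] [MulLeftMono G]

theorem zpow_strictMono_of_one_lt {a : G} (ha : 1 < a) : StrictMono fun n : ℤ ↦ a ^ n :=
  strictMono_int_of_lt_succ fun n ↦ by rw [zpow_add_one]; exact lt_mul_of_one_lt_right' _ ha

variable [MulRightMono G]

theorem exists_zpow_le_lt_zpow_succ (harch : ∀ (x : G) {y : G}, 1 < y → ∃ n : ℕ, x ≤ y ^ n)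
    {a : G} (ha : 1 < a) (g : G) : ∃ n : ℤ, a ^ n ≤ g ∧ g < a ^ (n + 1) := by
  have hmono := zpow_strictMono_of_one_lt ha
  obtain ⟨N, hN⟩ := harch g ha
  obtain ⟨M, hM⟩ := harch g⁻¹ ha
  have hbdd : ∃ N : ℤ, ∀ n : ℤ, a ^ n ≤ g → n ≤ N :=
    ⟨N, fun n hn ↦ hmono.le_iff_le.1 (by simpa using hn.trans hN)⟩
  have hne : ∃ n : ℤ, a ^ n ≤ g := ⟨-M, by simpa using inv_le'.1 hM⟩
  obtain ⟨n, hn, hmax⟩ := Int.exists_greatest_of_bdd hbdd hne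
  exact ⟨n, hn, lt_of_not_ge fun h ↦ by have := hmax _ h; omega⟩

theorem exists_one_lt_mul_self_le_or_forall_le (ε : G) :
    (∃ δ, 1 < δ ∧ δ * δ ≤ ε) ∨ ∀ g, 1 < g → ε ≤ g := by
  by_cases h : ∃ δ, 1 < δ ∧ δ < ε
  · obtain ⟨δ, hδ, hδε⟩ := h
    refine .inl ⟨min δ (δ⁻¹ * ε), lt_min hδ (lt_inv_mul_iff_mul_lt.2 (by rwa [mul_one])), ?_⟩
    calc min δ (δ⁻¹ * ε) * min δ (δ⁻¹ * ε) ≤ δ * (δ⁻¹ * ε) :=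
          mul_le_mul' (min_le_left _ _) (min_le_right _ _)
      _ = ε := mul_inv_cancel_left δ ε
  · push Not at h
    exact .inr h

theorem exists_eq_zpow_of_forall_le (harch : ∀ (x : G) {y : G}, 1 < y → ∃ n : ℕ, x ≤ y ^ n)
    {ε : G} (hε : 1 < ε) (hmin : ∀ g, 1 < g → ε ≤ g) (g : G) : ∃ n : ℤ, g = ε ^ n := by
  obtain ⟨n, hle, hlt⟩ := exists_zpow_le_lt_zpow_succ harch hε g
  refine ⟨n, le_antisymm (not_lt.1 fun h ↦ hlt.not_ge ?_) hle⟩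
  have := hmin _ (lt_inv_mul_iff_mul_lt.2 (by rwa [mul_one]))
  rwa [le_inv_mul_iff_mul_le, ← zpow_add_one] at this

theorem mul_comm_of_archimedean (harch : ∀ (x : G) {y : G}, 1 < y → ∃ n : ℕ, x ≤ y ^ n)
    (a b : G) : a * b = b * a := by
  suffices h : ∀ a b : G, ¬b * a < a * b by
    rcases lt_trichotomy (a * b) (b * a) with hlt | heq | hgt
    exacts [(h b a hlt).elim, heq, (h a b hgt).elim]
  intro a b hba
  set ε := (b * a)⁻¹ * (a * b)
  have hε : 1 < ε := lt_inv_mul_iff_mul_lt.2 (by rwa [mul_one])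
  rcases exists_one_lt_mul_self_le_or_forall_le ε with ⟨δ, hδ, hδε⟩ | hmin
  · obtain ⟨m, ham, ham'⟩ := exists_zpow_le_lt_zpow_succ harch hδ a
    obtain ⟨n, hbn, hbn'⟩ := exists_zpow_le_lt_zpow_succ harch hδ b
    have : ε < δ * δ := calc
      ε ≤ (δ ^ n * δ ^ m)⁻¹ * (a * b) :=
          mul_le_mul_left (inv_le_inv_iff.2 (mul_le_mul' hbn ham)) _
      _ < (δ ^ n * δ ^ m)⁻¹ * (δ ^ (m + 1) * δ ^ (n + 1)) :=
          mul_lt_mul_right (mul_lt_mul_of_lt_of_le ham' hbn'.le) _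
      _ = δ * δ := by group; exact zpow_two δ
    exact this.not_ge hδε
  · obtain ⟨m, ham⟩ := exists_eq_zpow_of_forall_le harch hε hmin a
    obtain ⟨n, hbn⟩ := exists_eq_zpow_of_forall_le harch hε hmin b
    rw [ham, hbn] at hba
    exact hba.ne (Commute.zpow_zpow_self ε n m).eq

theorem exists_injective_monoidHom_multiplicative_real_of_archimedean
    (harch : ∀ (x : G) {y : G}, 1 < y → ∃ n : ℕ, x ≤ y ^ n) :
    ∃ φ : G →* Multiplicative ℝ, Function.Injective φ := by
  let : CommGroup G := { ‹Group G› with mul_comm := mul_comm_of_archimedean harch }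
  have : IsOrderedMonoid G := { mul_le_mul_left := fun _ _ h c ↦ mul_le_mul_left h c }
  have : Archimedean (Additive G) := ⟨fun x _ hy ↦ harch x.toMul hy⟩
  obtain ⟨f, hf⟩ := Archimedean.exists_orderAddMonoidHom_real_injective (Additive G)
  exact ⟨AddMonoidHom.toMultiplicativeRight f.toAddMonoidHom, hf⟩

end Holder

theorem Continuous.forall_lt_or_forall_gt_of_forall_ne {f : ℝ → ℝ} (hf : Continuous f)
    (h : ∀ x, f x ≠ x) : (∀ x, x < f x) ∨ ∀ x, f x < x := by
  by_contra! hc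
  obtain ⟨⟨a, ha⟩, b, hb⟩ := hc
  obtain ⟨c, -, hc⟩ := intermediate_value_uIcc (hf.sub continuous_id).continuousOn
    (Set.mem_uIcc.2 (.inl ⟨sub_nonpos.2 ha, sub_nonneg.2 hb⟩))
  exact h c (sub_eq_zero.1 hc)

theorem Continuous.exists_lt_iterate {f : ℝ → ℝ} (hf : Continuous f) (hlt : ∀ x, x < f x)
    (x b : ℝ) : ∃ n, b < f^[n] x := by
  by_contra! hb
  have hmono : Monotone fun n ↦ f^[n] x := monotone_nat_of_le_succ fun n ↦ by
    rw [Function.iterate_succ_apply']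
    exact (hlt _).le
  have hfix := isFixedPt_of_tendsto_iterate
    (tendsto_atTop_ciSup hmono ⟨b, Set.forall_mem_range.2 hb⟩) hf.continuousAt
  exact (hlt _).ne' hfix

section FreeAction

variable {G : Type*} [Group G] [MulAction G ℝ]

theorem smul_left_injective_of_free (hfree : ∀ (g : G) (x : ℝ), g • x = x → g = 1) (x : ℝ) :
    Function.Injective (· • x : G → ℝ) := fun g h (hgh : g • x = h • x) ↦
  (inv_mul_eq_one.1 (hfree _ x (by rw [mul_smul, hgh, inv_smul_smul]))).symm

theorem forall_lt_smul_of_lt_smul (hcont : ∀ g : G, Continuous (g • · : ℝ → ℝ))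
    (hfree : ∀ (g : G) (x : ℝ), g • x = x → g = 1) {g : G} {x : ℝ} (hx : x < g • x) (y : ℝ) :
    y < g • y := by
  have hne : ∀ y, g • y ≠ y := fun y hy ↦ hx.ne' (by rw [hfree g y hy, one_smul])
  exact ((hcont g).forall_lt_or_forall_gt_of_forall_ne hne).resolve_right
    (fun h ↦ (h x).not_gt hx) y

theorem smul_le_smul_of_smul_le_smul (hcont : ∀ g : G, Continuous (g • · : ℝ → ℝ))
    (hmono : ∀ g : G, Monotone (g • · : ℝ → ℝ)) (hfree : ∀ (g : G) (x : ℝ), g • x = x → g = 1)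
    {g h : G} {x : ℝ} (hx : g • x ≤ h • x) (y : ℝ) : g • y ≤ h • y := by
  have hstrict (k : G) : StrictMono (k • · : ℝ → ℝ) :=
    (hmono k).strictMono_of_injective (MulAction.injective k)
  by_contra! hy
  have hy' : y < (h⁻¹ * g) • y := by
    simpa only [mul_smul, inv_smul_smul] using hstrict h⁻¹ hy
  have hx' := hstrict h (forall_lt_smul_of_lt_smul hcont hfree hy' x)
  simp only [mul_smul, smul_inv_smul] at hx'
  exact hx.not_gt hx'

theorem exists_lt_pow_smul (hcont : ∀ g : G, Continuous (g • · : ℝ → ℝ))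
    (hfree : ∀ (g : G) (x : ℝ), g • x = x → g = 1) {a : G} {x : ℝ} (ha : x < a • x) (b : ℝ) :
    ∃ n : ℕ, b < a ^ n • x := by
  obtain ⟨n, hn⟩ := (hcont a).exists_lt_iterate (forall_lt_smul_of_lt_smul hcont hfree ha) x b
  exact ⟨n, by rwa [smul_iterate_apply] at hn⟩

theorem exists_injective_monoidHom_multiplicative_real_of_free
    (hcont : ∀ g : G, Continuous (g • · : ℝ → ℝ)) (hmono : ∀ g : G, Monotone (g • · : ℝ → ℝ))
    (hfree : ∀ (g : G) (x : ℝ), g • x = x → g = 1) :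
    ∃ φ : G →* Multiplicative ℝ, Function.Injective φ := by
  let : LinearOrder G := LinearOrder.lift' (· • (0 : ℝ)) (smul_left_injective_of_free hfree 0)
  have : MulLeftMono G := ⟨fun c g h (hgh : g • (0 : ℝ) ≤ h • 0) ↦
    show (c * g) • (0 : ℝ) ≤ (c * h) • 0 by simpa only [mul_smul] using hmono c hgh⟩
  have : MulRightMono G := ⟨fun c g h (hgh : g • (0 : ℝ) ≤ h • 0) ↦
    show (g * c) • (0 : ℝ) ≤ (h * c) • 0 by
      simpa only [mul_smul] using smul_le_smul_of_smul_le_smul hcont hmono hfree hgh (c • 0)⟩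
  refine exists_injective_monoidHom_multiplicative_real_of_archimedean fun x y hy ↦ ?_
  have hy : (1 : G) • (0 : ℝ) < y • 0 := hy
  rw [one_smul] at hy
  obtain ⟨n, hn⟩ := exists_lt_pow_smul hcont hfree hy (x • 0)
  exact ⟨n, hn.le⟩

end FreeAction

/-- Hölder's theorem: a group of orientation-preserving homeomorphisms of the real
line (realized as a subgroup of the permutations of `ℝ` whose elements are continuous
and monotone, hence orientation-preserving homeomorphisms) acting freely embeds in
`(ℝ, +)`; in particular it is abelian. -/
theorem stmt7 (G : Subgroup (Equiv.Perm ℝ))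
    (hcont : ∀ g ∈ G, Continuous (⇑g))
    (horient : ∀ g ∈ G, Monotone (⇑g))
    (hfree : ∀ g ∈ G, (∃ x : ℝ, g x = x) → g = 1) :
    (∃ φ : G →* Multiplicative ℝ, Function.Injective φ) ∧
      ∀ g ∈ G, ∀ h ∈ G, g * h = h * g := by
  obtain ⟨φ, hφ⟩ := exists_injective_monoidHom_multiplicative_real_of_free (G := G)
    (fun g ↦ hcont g g.2) (fun g ↦ horient g g.2) fun g x hx ↦ Subtype.ext (hfree g g.2 ⟨x, hx⟩)
  refine ⟨⟨φ, hφ⟩, fun g hg h hh ↦ ?_⟩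
  have hcomm : (⟨g, hg⟩ * ⟨h, hh⟩ : G) = ⟨h, hh⟩ * ⟨g, hg⟩ :=
    hφ (by rw [map_mul, map_mul, mul_comm])
  exact congrArg Subtype.val hcomm
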